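/- (Lemma 3) Let n₁, n₂ ≥ 1 be integers and η₀ ≤ η₁, η₂ be reals, and let E be a region of strong effect determined by data s, μ_1 > ... > μ_s > 0 and 0 < p_1 < ... < p_{s+1} = 1. Then the two-stage type II error probability β₂ attains its maximum over E at a corner: for every (μ,p) ∈ E, β₂(μ,p) ≤ max_{i=1,...,s} β₂(μ_i,p_i). -/

import Mathlib

open MeasureTheory Real

/-- Standard normal density. -/
noncomputable def stdphi (t : ℝ) : ℝ := (Real.sqrt (2 * Real.pi))⁻¹ * Real.exp (-t ^ 2 / 2)

/-- Standard normal CDF. -/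
noncomputable def stdPhi (x : ℝ) : ℝ := ∫ t in Set.Iic x, stdphi t

/-- The type II error function β(n,η,μ,p). -/
noncomputable def betaFn (n : ℕ) (η μ p : ℝ) : ℝ :=
  ∑ k ∈ Finset.range (n + 1), (n.choose k : ℝ) * p ^ k * (1 - p) ^ (n - k) *
    stdPhi (Real.sqrt ((n : ℝ) / 2) * (η - (k : ℝ) * μ / n))

/-- The density-type function β_η(n,x,μ,p). -/
noncomputable def betaEta (n : ℕ) (x μ p : ℝ) : ℝ :=
  ∑ k ∈ Finset.range (n + 1), (n.choose k : ℝ) * p ^ k * (1 - p) ^ (n - k) *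
    (Real.sqrt ((n : ℝ) / 2) * stdphi (Real.sqrt ((n : ℝ) / 2) * (x - (k : ℝ) * μ / n)))

/-- The two-stage type II error probability β₂(μ,p). -/
noncomputable def beta2 (n₁ n₂ : ℕ) (η₀ η₁ η₂ μ p : ℝ) : ℝ :=
  betaFn n₁ η₀ μ p + ∫ x in η₀..η₁, betaEta n₁ x μ p *
    betaFn n₂ (((n₁ : ℝ) + n₂) / n₂ * η₂ - (n₁ : ℝ) / n₂ * x) μ p

/-!
Conditioning on the number `K ~ Bin(n₁, p)` of first-stage successes, `β₂(μ, p) = E_p[g_{μ,p}(K)]`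
with `g_{μ,p}(k) = E[H_{μ,p}(X)]`, where `X ~ N(kμ/n₁, 2/n₁)` is the first-stage statistic and
`H_{μ,p}(x)` is the probability of accepting given `X = x`: `1` up to `η₀`, the second-stage `β` up
to `η₁`, and `0` beyond. Since `β` decreases in `μ` and in `p`, `H_{μ,p}` is antitone and decreases
pointwise as `μ` and `p` grow. Hence `g_{μ,p}(k)` decreases in `μ`, `p` and `k`, and since
`Bin(n₁, p)` is stochastically increasing in `p`, `β₂` is antitone in `(μ, p)` on
`[0, ∞) × [0, 1]`. On the `i`-th piece of `E` the corner `(μ_i, p_i)` is therefore the worst case.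
-/

open Set ProbabilityTheory

lemma stdphi_eq_gaussianPDFReal : stdphi = gaussianPDFReal 0 1 := by
  ext t
  simp [stdphi, gaussianPDFReal]

lemma stdphi_nonneg (t : ℝ) : 0 ≤ stdphi t :=
  stdphi_eq_gaussianPDFReal ▸ gaussianPDFReal_nonneg 0 1 t

@[fun_prop]
lemma continuous_stdphi : Continuous stdphi := by
  unfold stdphi
  fun_prop

lemma integrable_stdphi : Integrable stdphi :=
  stdphi_eq_gaussianPDFReal ▸ integrable_gaussianPDFReal 0 1

lemma stdPhi_mem_Icc (x : ℝ) : stdPhi x ∈ Icc 0 1 := by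
  have htotal : ∫ t, stdphi t = 1 :=
    stdphi_eq_gaussianPDFReal ▸ integral_gaussianPDFReal_eq_one 0 one_ne_zero
  refine ⟨setIntegral_nonneg measurableSet_Iic fun t _ => stdphi_nonneg t, ?_⟩
  exact htotal ▸ setIntegral_le_integral integrable_stdphi (.of_forall stdphi_nonneg)

lemma stdPhi_mono : Monotone stdPhi := fun _ _ hxy =>
  setIntegral_mono_set integrable_stdphi.integrableOn (.of_forall stdphi_nonneg)
    (Iic_subset_Iic.mpr hxy).eventuallyLE

noncomputable def binomialMean (n : ℕ) (p : ℝ) (f : ℕ → ℝ) : ℝ :=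
  ∑ k ∈ Finset.range (n + 1), (n.choose k : ℝ) * p ^ k * (1 - p) ^ (n - k) * f k

lemma binomialMean_succ (n : ℕ) (p : ℝ) (f : ℕ → ℝ) :
    binomialMean (n + 1) p f =
      (1 - p) * binomialMean n p f + p * binomialMean n p (fun k => f (k + 1)) := by
  have hshift : (1 - p) * binomialMean n p f =
      ∑ k ∈ Finset.range (n + 1), (n.choose (k + 1) : ℝ) * p ^ (k + 1) * (1 - p) ^ (n - k) *
        f (k + 1) + (1 - p) ^ (n + 1) * f 0 := by
    rw [binomialMean, Finset.mul_sum, Finset.sum_range_succ', Finset.sum_range_succ _ n]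
    simp only [Nat.choose_succ_self, Nat.choose_zero_right, Nat.sub_zero]
    congr 1
    · simp only [Nat.cast_zero, zero_mul, add_zero]
      refine Finset.sum_congr rfl fun k hk => ?_
      rw [show n - k = n - (k + 1) + 1 by grind]
      ring
    · ring
  rw [binomialMean, Finset.sum_range_succ', hshift, binomialMean, Finset.mul_sum]
  simp only [Nat.choose_succ_succ', Nat.cast_add, add_mul, Finset.sum_add_distrib,
    Nat.succ_sub_succ, Nat.choose_zero_right, Nat.sub_zero]
  rw [Finset.sum_congr rfl fun k _ => show p * ((n.choose k : ℝ) * p ^ k * (1 - p) ^ (n - k) *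
    f (k + 1)) = (n.choose k : ℝ) * p ^ (k + 1) * (1 - p) ^ (n - k) * f (k + 1) by ring]
  ring

lemma binomialMean_mono {n : ℕ} {p : ℝ} (hp : p ∈ Icc 0 1) {f g : ℕ → ℝ}
    (hfg : ∀ k, f k ≤ g k) : binomialMean n p f ≤ binomialMean n p g := by
  have hq : 0 ≤ 1 - p := sub_nonneg.2 hp.2
  have hp₀ : 0 ≤ p := hp.1
  exact Finset.sum_le_sum fun k _ => mul_le_mul_of_nonneg_left (hfg k) (by positivity)

lemma binomialMean_const (n : ℕ) (p c : ℝ) : binomialMean n p (fun _ => c) = c :=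
  calc binomialMean n p (fun _ => c)
      = (∑ k ∈ Finset.range (n + 1), p ^ k * (1 - p) ^ (n - k) * n.choose k) * c := by
        rw [binomialMean, Finset.sum_mul]
        exact Finset.sum_congr rfl fun k _ => by ring
    _ = c := by rw [← add_pow, add_sub_cancel, one_pow, one_mul]

lemma binomialMean_mem_Icc {n : ℕ} {p : ℝ} (hp : p ∈ Icc 0 1) {f : ℕ → ℝ} {a b : ℝ}
    (hf : ∀ k, f k ∈ Icc a b) : binomialMean n p f ∈ Icc a b := by
  constructor
  · simpa only [binomialMean_const] using binomialMean_mono (n := n) hp fun k => (hf k).1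
  · simpa only [binomialMean_const] using binomialMean_mono (n := n) hp fun k => (hf k).2

lemma binomialMean_add (n : ℕ) (p : ℝ) (f g : ℕ → ℝ) :
    binomialMean n p (fun k => f k + g k) = binomialMean n p f + binomialMean n p g := by
  simp only [binomialMean, mul_add, Finset.sum_add_distrib]

lemma binomialMean_antitoneOn {n : ℕ} {f : ℕ → ℝ} (hf : Antitone f) :
    AntitoneOn (fun p => binomialMean n p f) (Icc 0 1) := by
  induction n generalizing f with
  | zero => intro p _ q _ _; simp [binomialMean]
  | succ n ih =>
    intro p hp q hq hpq
    have hA := ih hf hp hq hpq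
    have hB := ih (f := fun k => f (k + 1)) (fun _ _ h => hf (by omega)) hp hq hpq
    have hBA : binomialMean n p (fun k => f (k + 1)) ≤ binomialMean n p f :=
      binomialMean_mono hp fun k => hf k.le_succ
    simp only [binomialMean_succ]
    -- `(1 - q) A_q + q B_q ≤ A_p - q (A_p - B_p) ≤ A_p - p (A_p - B_p)`, as `B_p ≤ A_p`
    nlinarith [hq.1, hq.2]

/-- Probability that the two-stage test accepts given the first-stage statistic `x`, when the
second stage accepts with probability `G x`. -/
noncomputable def twoStageAccept (η₀ η₁ : ℝ) (G : ℝ → ℝ) (x : ℝ) : ℝ :=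
  if x ≤ η₀ then 1 else if x ≤ η₁ then G x else 0

section TwoStageAccept

variable {η₀ η₁ : ℝ} {G G' : ℝ → ℝ}

lemma twoStageAccept_mem_Icc (hG : ∀ x, G x ∈ Icc 0 1) (x : ℝ) :
    twoStageAccept η₀ η₁ G x ∈ Icc 0 1 := by
  unfold twoStageAccept
  split_ifs
  exacts [⟨zero_le_one, le_rfl⟩, hG x, ⟨le_rfl, zero_le_one⟩]

lemma twoStageAccept_antitone (hG : Antitone G) (hG01 : ∀ x, G x ∈ Icc 0 1) :
    Antitone (twoStageAccept η₀ η₁ G) := by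
  intro x y hxy
  unfold twoStageAccept
  split_ifs <;> first | linarith | exact (hG01 _).1 | exact (hG01 _).2 | exact hG hxy

lemma twoStageAccept_mono (hGG' : ∀ x, G x ≤ G' x) (x : ℝ) :
    twoStageAccept η₀ η₁ G x ≤ twoStageAccept η₀ η₁ G' x := by
  unfold twoStageAccept
  split_ifs
  exacts [le_rfl, hGG' x, le_rfl]

end TwoStageAccept

/-- `E[H X]` for `X ~ N(m, a⁻²)`. -/
noncomputable def gaussMean (a m : ℝ) (H : ℝ → ℝ) : ℝ :=
  ∫ u, stdphi u * H (u / a + m)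

lemma integrable_stdphi_mul_comp {H : ℝ → ℝ} (hH : Measurable H) (hb : ∀ x, H x ∈ Icc 0 1)
    (a m : ℝ) : Integrable fun u => stdphi u * H (u / a + m) := by
  refine integrable_stdphi.mul_bdd (c := 1) ?_ (.of_forall fun u => ?_)
  · exact (hH.comp ((measurable_id.div_const a).add_const m)).aestronglyMeasurable
  · rw [Real.norm_of_nonneg (hb _).1]
    exact (hb _).2

lemma gaussMean_le_gaussMean {H H' : ℝ → ℝ} (hH : Antitone H) (hH' : Measurable H')
    (hb : ∀ x, H x ∈ Icc 0 1) (hb' : ∀ x, H' x ∈ Icc 0 1) (hle : ∀ x, H' x ≤ H x)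
    (a : ℝ) {m m' : ℝ} (hm : m ≤ m') : gaussMean a m' H' ≤ gaussMean a m H :=
  integral_mono (integrable_stdphi_mul_comp hH' hb' a m')
    (integrable_stdphi_mul_comp hH.measurable hb a m) fun u =>
      mul_le_mul_of_nonneg_left ((hle _).trans (hH (by linarith))) (stdphi_nonneg u)

lemma stdPhi_add_integral_eq_gaussMean {a : ℝ} (ha : 0 < a) (m : ℝ) {η₀ η₁ : ℝ} (hη : η₀ ≤ η₁)
    {G : ℝ → ℝ} (hG : Measurable G) (hb : ∀ x, G x ∈ Icc 0 1) :
    stdPhi (a * (η₀ - m)) + ∫ x in η₀..η₁, a * stdphi (a * (x - m)) * G x =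
      gaussMean a m (twoStageAccept η₀ η₁ G) := by
  set F : ℝ → ℝ := fun u => stdphi u * G (u / a + m)
  have hsubst : ∫ x in η₀..η₁, a * stdphi (a * (x - m)) * G x =
      ∫ u in a * η₀ - a * m..a * η₁ - a * m, F u := by
    rw [← intervalIntegral.smul_integral_comp_mul_sub, smul_eq_mul,
      ← intervalIntegral.integral_const_mul]
    refine intervalIntegral.integral_congr fun x _ => ?_
    simp only [F, mul_sub, mul_assoc]
    congr 3
    field_simp
    ring
  have hcut : ∀ η u, u / a + m ≤ η ↔ u ≤ a * η - a * m := fun η u => by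
    rw [← le_sub_iff_add_le, div_le_iff₀ ha]
    constructor <;> intro h <;> linarith
  have hsplit : ∀ u, stdphi u * twoStageAccept η₀ η₁ G (u / a + m) =
      (Iic (a * η₀ - a * m)).indicator stdphi u +
        (Ioc (a * η₀ - a * m) (a * η₁ - a * m)).indicator F u := by
    intro u
    simp only [twoStageAccept, hcut, indicator, mem_Iic, mem_Ioc, F]
    split_ifs <;> grind
  have hc : a * η₀ - a * m ≤ a * η₁ - a * m := by gcongr
  rw [hsubst, intervalIntegral.integral_of_le hc, gaussMean, integral_congr_ae (.of_forall hsplit),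
    integral_add (integrable_stdphi.indicator measurableSet_Iic)
      ((integrable_stdphi_mul_comp hG hb a m).indicator measurableSet_Ioc),
    integral_indicator measurableSet_Iic, integral_indicator measurableSet_Ioc, ← mul_sub]
  rfl

lemma betaFn_eq_binomialMean (n : ℕ) (η μ p : ℝ) :
    betaFn n η μ p = binomialMean n p fun k => stdPhi (√((n : ℝ) / 2) * (η - k * μ / n)) :=
  rfl

section BetaFn

variable {n : ℕ} {p : ℝ}

lemma betaFn_mem_Icc (hp : p ∈ Icc 0 1) (η μ : ℝ) : betaFn n η μ p ∈ Icc 0 1 :=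
  binomialMean_mem_Icc hp fun _ => stdPhi_mem_Icc _

lemma betaFn_monotone (hp : p ∈ Icc 0 1) (μ : ℝ) : Monotone fun η => betaFn n η μ p :=
  fun _ _ hη => binomialMean_mono hp fun _ => stdPhi_mono (by gcongr)

lemma betaFn_le_betaFn {μ₀ μ p₀ : ℝ} (hμ₀ : 0 ≤ μ₀) (hμ : μ₀ ≤ μ) (hp₀ : p₀ ∈ Icc 0 1)
    (hp : p ∈ Icc 0 1) (hp₀p : p₀ ≤ p) (η : ℝ) : betaFn n η μ p ≤ betaFn n η μ₀ p₀ :=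
  calc betaFn n η μ p ≤ betaFn n η μ₀ p := binomialMean_mono hp fun _ => stdPhi_mono (by gcongr)
    _ ≤ betaFn n η μ₀ p₀ :=
      binomialMean_antitoneOn (fun _ _ hk => stdPhi_mono (by gcongr)) hp₀ hp hp₀p

end BetaFn

noncomputable def secondStage (n₁ n₂ : ℕ) (η₂ μ p x : ℝ) : ℝ :=
  betaFn n₂ (((n₁ : ℝ) + n₂) / n₂ * η₂ - (n₁ : ℝ) / n₂ * x) μ p

lemma secondStage_antitone (n₁ n₂ : ℕ) (η₂ μ : ℝ) {p : ℝ} (hp : p ∈ Icc 0 1) :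
    Antitone (secondStage n₁ n₂ η₂ μ p) :=
  fun _ _ hx => betaFn_monotone hp μ (by gcongr)

lemma integral_betaEta_mul (n : ℕ) (μ p : ℝ) {G : ℝ → ℝ} {η₀ η₁ : ℝ}
    (hG : IntervalIntegrable G volume η₀ η₁) :
    ∫ x in η₀..η₁, betaEta n x μ p * G x = binomialMean n p fun k =>
      ∫ x in η₀..η₁, √((n : ℝ) / 2) * stdphi (√((n : ℝ) / 2) * (x - k * μ / n)) * G x := by
  simp only [betaEta, Finset.sum_mul, binomialMean, ← intervalIntegral.integral_const_mul]
  rw [intervalIntegral.integral_finsetSum fun k _ => hG.continuousOn_mul (by fun_prop)]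
  simp only [mul_assoc]

section Beta2

variable {n₁ n₂ : ℕ} {η₀ η₁ η₂ μ p : ℝ}

lemma beta2_eq_binomialMean (hn₁ : 1 ≤ n₁) (hη : η₀ ≤ η₁) (hp : p ∈ Icc 0 1) :
    beta2 n₁ n₂ η₀ η₁ η₂ μ p = binomialMean n₁ p fun k =>
      gaussMean √((n₁ : ℝ) / 2) (k * μ / n₁) (twoStageAccept η₀ η₁ (secondStage n₁ n₂ η₂ μ p)) := by
  have hG := secondStage_antitone n₁ n₂ η₂ μ hp
  have ha : 0 < √((n₁ : ℝ) / 2) := Real.sqrt_pos.2 (by positivity)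
  have hsum := integral_betaEta_mul n₁ μ p (hG.intervalIntegrable (a := η₀) (b := η₁))
  unfold secondStage at hsum
  rw [beta2, hsum, betaFn_eq_binomialMean, ← binomialMean_add]
  congr 1 with k
  exact stdPhi_add_integral_eq_gaussMean ha _ hη hG.measurable fun _ => betaFn_mem_Icc hp _ _

lemma beta2_le_beta2 (hn₁ : 1 ≤ n₁) (hη : η₀ ≤ η₁) {μ₀ p₀ : ℝ} (hμ₀ : 0 ≤ μ₀) (hμ : μ₀ ≤ μ)
    (hp₀ : p₀ ∈ Icc 0 1) (hp : p ∈ Icc 0 1) (hp₀p : p₀ ≤ p) :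
    beta2 n₁ n₂ η₀ η₁ η₂ μ p ≤ beta2 n₁ n₂ η₀ η₁ η₂ μ₀ p₀ := by
  set H := twoStageAccept η₀ η₁ (secondStage n₁ n₂ η₂ μ p)
  set H₀ := twoStageAccept η₀ η₁ (secondStage n₁ n₂ η₂ μ₀ p₀)
  have hH : Antitone H :=
    twoStageAccept_antitone (secondStage_antitone n₁ n₂ η₂ μ hp) fun _ => betaFn_mem_Icc hp _ _
  have hH₀ : Antitone H₀ :=
    twoStageAccept_antitone (secondStage_antitone n₁ n₂ η₂ μ₀ hp₀) fun _ => betaFn_mem_Icc hp₀ _ _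
  have hb : ∀ x, H x ∈ Icc 0 1 := twoStageAccept_mem_Icc fun _ => betaFn_mem_Icc hp _ _
  have hb₀ : ∀ x, H₀ x ∈ Icc 0 1 := twoStageAccept_mem_Icc fun _ => betaFn_mem_Icc hp₀ _ _
  have hle : ∀ x, H x ≤ H₀ x :=
    twoStageAccept_mono fun _ => betaFn_le_betaFn hμ₀ hμ hp₀ hp hp₀p _
  rw [beta2_eq_binomialMean hn₁ hη hp, beta2_eq_binomialMean hn₁ hη hp₀]
  calc binomialMean n₁ p (fun k => gaussMean √((n₁ : ℝ) / 2) (k * μ / n₁) H)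
      ≤ binomialMean n₁ p (fun k => gaussMean √((n₁ : ℝ) / 2) (k * μ₀ / n₁) H₀) :=
        binomialMean_mono hp fun _ =>
          gaussMean_le_gaussMean hH₀ hH.measurable hb₀ hb hle _ (by gcongr)
    _ ≤ binomialMean n₁ p₀ (fun k => gaussMean √((n₁ : ℝ) / 2) (k * μ₀ / n₁) H₀) :=
        binomialMean_antitoneOn (fun _ _ hk =>
          gaussMean_le_gaussMean hH₀ hH₀.measurable hb₀ hb₀ (fun _ => le_rfl) _ (by gcongr))
          hp₀ hp hp₀p

end Beta2

theorem beta2_max_on_strong_effect_general (n₁ n₂ : ℕ) (hn₁ : 1 ≤ n₁)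
    (η₀ η₁ η₂ : ℝ) (hη : η₀ ≤ η₁)
    (s : ℕ) (μs : Fin s → ℝ) (ps : Fin (s + 1) → ℝ)
    (hμpos : ∀ i, 0 < μs i)
    (hpmono : StrictMono ps) (hp0 : 0 < ps 0) (hplast : ps (Fin.last s) = 1)
    (E : Set (ℝ × ℝ))
    (hE : E = {q : ℝ × ℝ | ∃ i : Fin s,
      ps i.castSucc ≤ q.2 ∧ q.2 ≤ ps i.succ ∧ μs i ≤ q.1}) :
    ∀ q ∈ E, ∃ i : Fin s,
      beta2 n₁ n₂ η₀ η₁ η₂ q.1 q.2 ≤ beta2 n₁ n₂ η₀ η₁ η₂ (μs i) (ps i.castSucc) := by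
  subst hE
  rintro q ⟨i, hpi, hpi', hμi⟩
  have hpi₀ : 0 ≤ ps i.castSucc := hp0.le.trans (hpmono.monotone (Fin.zero_le _))
  have hq₁ : q.2 ≤ 1 := hplast ▸ hpi'.trans (hpmono.monotone (Fin.le_last _))
  exact ⟨i, beta2_le_beta2 hn₁ hη (hμpos i).le hμi ⟨hpi₀, hpi.trans hq₁⟩ ⟨hpi₀.trans hpi, hq₁⟩ hpi⟩

/-- (Lemma 3) On a region of strong effect, the two-stage type II error probability `β₂`
is maximized at one of the corners `(μ_i, p_i)`. -/
theorem beta2_max_on_strong_effect (n₁ n₂ : ℕ) (hn₁ : 1 ≤ n₁) (hn₂ : 1 ≤ n₂)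
    (η₀ η₁ η₂ : ℝ) (hη : η₀ ≤ η₁)
    (s : ℕ) (hs : 1 ≤ s) (μs : Fin s → ℝ) (ps : Fin (s + 1) → ℝ)
    (hμanti : StrictAnti μs) (hμpos : ∀ i, 0 < μs i)
    (hpmono : StrictMono ps) (hp0 : 0 < ps 0) (hplast : ps (Fin.last s) = 1)
    (E : Set (ℝ × ℝ))
    (hE : E = {q : ℝ × ℝ | ∃ i : Fin s,
      ps i.castSucc ≤ q.2 ∧ q.2 ≤ ps i.succ ∧ μs i ≤ q.1}) :
    ∀ q ∈ E, ∃ i : Fin s,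
      beta2 n₁ n₂ η₀ η₁ η₂ q.1 q.2 ≤ beta2 n₁ n₂ η₀ η₁ η₂ (μs i) (ps i.castSucc) :=
  beta2_max_on_strong_effect_general n₁ n₂ hn₁ η₀ η₁ η₂ hη s μs ps hμpos hpmono hp0 hplast E hE
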